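/- Let V be a Banach space, T > 0, z₁,z₂ > 1, and let a ∈ 𝒞𝒞_{2,2}(V). Assume: (i) δ₁a admits a finite decomposition δ₁a = Σ_k h_k with h_k ∈ 𝒞𝒞_{3,2}(V) and, for each k, constants C_k ≥ 0 and γ_k ∈ (0,z₁) such that |h_k((s₁,u,s₂),(t₁,t₂))| ≤ C_k |u−s₁|^{γ_k} |s₂−u|^{z₁−γ_k} for all arguments; (ii) symmetrically, δ₂a admits a finite decomposition δ₂a = Σ_k h′_k with |h′_k((s₁,s₂),(t₁,v,t₂))| ≤ C′_k |v−t₁|^{γ′_k} |t₂−v|^{z₂−γ′_k}, γ′_k ∈ (0,z₂); (iii) ‖δa‖_{z₁,z₂} < ∞. Then there exists a continuous function f : [0,T]² → V such that, for every rectangle [s,s′]×[t,t′] ⊆ [0,T]², the Riemann sums Σ_{i,j} a((σ_i,σ_{i+1}),(τ_j,τ_{j+1})) over grid partitions Π converge, as |Π| → 0, to f(s′,t′) − f(s,t′) − f(s′,t) + f(s,t). -/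

import Mathlib

open Set

section
variable {V : Type*} [NormedAddCommGroup V]

/-- `δ₁a ∈ 𝒞𝒞_{3,2}(V)` for `a ∈ 𝒞𝒞_{2,2}(V)`:
`(δ₁a)((s₁,u,s₂),(t₁,t₂)) = a(u,s₂;·) − a(s₁,s₂;·) + a(s₁,u;·)`. -/
def del1 (a : ℝ → ℝ → ℝ → ℝ → V) (s₁ u s₂ t₁ t₂ : ℝ) : V :=
  a u s₂ t₁ t₂ - a s₁ s₂ t₁ t₂ + a s₁ u t₁ t₂

/-- `δ₂a ∈ 𝒞𝒞_{2,3}(V)` for `a ∈ 𝒞𝒞_{2,2}(V)`. -/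
def del2 (a : ℝ → ℝ → ℝ → ℝ → V) (s₁ s₂ t₁ v t₂ : ℝ) : V :=
  a s₁ s₂ v t₂ - a s₁ s₂ t₁ t₂ + a s₁ s₂ t₁ v

/-- `δa = δ₂δ₁a ∈ 𝒞𝒞_{3,3}(V)` for `a ∈ 𝒞𝒞_{2,2}(V)`. -/
def delFull (a : ℝ → ℝ → ℝ → ℝ → V) (s₁ u₁ s₂ t₁ u₂ t₂ : ℝ) : V :=
  del1 a s₁ u₁ s₂ u₂ t₂ - del1 a s₁ u₁ s₂ t₁ t₂ + del1 a s₁ u₁ s₂ t₁ u₂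

end

/-- `σ` is a grid of `[a,b]` with `m` subintervals. -/
def IsGrid (a b : ℝ) (m : ℕ) (σ : ℕ → ℝ) : Prop :=
  σ 0 = a ∧ σ m = b ∧ ∀ i < m, σ i < σ (i + 1)

/-- The mesh of the grid `σ` is at most `η`. -/
def MeshLE (m : ℕ) (σ : ℕ → ℝ) (η : ℝ) : Prop :=
  ∀ i < m, σ (i + 1) - σ i ≤ η

/-!
Riemann sums are compared through Young's maximal inequality: deleting one point from a
one-parameter grid changes `∑ g(σᵢ, σᵢ₊₁)` by a coboundary `δg(x, u, y)`, and pigeonhole finds a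
point whose neighbours are within `2(q - p)/(r - 1)`, so `‖δg(x, u, y)‖ ≤ D (y - x)^z` with `z > 1`
gives `‖∑ g(σᵢ, σᵢ₊₁) - g(p, q)‖ ≤ D 2^z ζ(z) (q - p)^z`. In the first variable we apply this to
`x, y ↦ ∑ⱼ a(x, y, τⱼ, τⱼ₊₁)`, whose coboundary is `∑ⱼ δ₁a(x, u, y, τⱼ, τⱼ₊₁)`; that sum is in turn
controlled by (i) and, by Young's inequality in the second variable, by (iii). Hence refining `σ`
block by block changes the Riemann sum by `O(η^(z₁-1))`, and symmetrically refining `τ` costs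
`O(η^(z₂-1))`. Through a common refinement, any two Riemann sums of mesh `≤ η` are
`O(η^(z₁-1) + η^(z₂-1))`-close, so they converge to some `L(s, s', t, t')`, which is additive
under splitting the rectangle. Then `f(s, t) = L(0, s, 0, t)` has the required rectangular
increments, and it is continuous as a uniform limit of Riemann sums over uniform grids.
-/

open Set Finset Filter Topology

section Grids

variable {p q q' η : ℝ} {m m' r j : ℕ} {σ σ' u : ℕ → ℝ}

theorem IsGrid.strictMonoOn (hσ : IsGrid p q m σ) : StrictMonoOn σ (Set.Iic m) :=
  strictMonoOn_Iic_of_lt_succ hσ.2.2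

theorem IsGrid.mem (hσ : IsGrid p q m σ) {i : ℕ} (hi : i ≤ m) : σ i ∈ Icc p q := by
  have hmono := hσ.strictMonoOn.monotoneOn
  constructor
  · simpa only [hσ.1] using hmono (Nat.zero_le m) hi (Nat.zero_le i)
  · simpa only [hσ.2.1] using hmono hi (le_refl m) hi

theorem IsGrid.le (hσ : IsGrid p q m σ) : p ≤ q :=
  (hσ.mem (Nat.zero_le m)).1.trans (hσ.mem (Nat.zero_le m)).2

theorem IsGrid.restrict (hσ : IsGrid p q m σ) {a b : ℕ} (hab : a ≤ b) (hb : b ≤ m) :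
    IsGrid (σ a) (σ b) (b - a) (fun l => σ (a + l)) :=
  ⟨rfl, by simp only [Nat.add_sub_cancel' hab], fun l hl => hσ.2.2 (a + l) (by omega)⟩

theorem sum_rpow_sub_le {z : ℝ} (hz : 1 ≤ z) (hσ : IsGrid p q m σ) (hmesh : MeshLE m σ η) :
    ∑ i ∈ range m, (σ (i + 1) - σ i) ^ z ≤ (q - p) * η ^ (z - 1) := by
  have hterm : ∀ i ∈ range m, (σ (i + 1) - σ i) ^ z ≤ (σ (i + 1) - σ i) * η ^ (z - 1) := by
    intro i hi
    have hgap : 0 < σ (i + 1) - σ i := sub_pos.mpr (hσ.2.2 i (mem_range.mp hi))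
    calc (σ (i + 1) - σ i) ^ z = (σ (i + 1) - σ i) * (σ (i + 1) - σ i) ^ (z - 1) := by
          rw [Real.rpow_sub_one hgap.ne', mul_div_cancel₀ _ hgap.ne']
      _ ≤ (σ (i + 1) - σ i) * η ^ (z - 1) := by
          gcongr
          exact hmesh i (mem_range.mp hi)
  calc ∑ i ∈ range m, (σ (i + 1) - σ i) ^ z
      ≤ ∑ i ∈ range m, (σ (i + 1) - σ i) * η ^ (z - 1) := sum_le_sum hterm
    _ = (q - p) * η ^ (z - 1) := by rw [← sum_mul, sum_range_sub, hσ.1, hσ.2.1]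

noncomputable def uniformGrid (p q : ℝ) (n : ℕ) (i : ℕ) : ℝ := p + (q - p) * i / n

theorem isGrid_uniformGrid (hpq : p < q) {n : ℕ} (hn : n ≠ 0) :
    IsGrid p q n (uniformGrid p q n) := by
  have hn' : (0 : ℝ) < n := by positivity
  refine ⟨by simp [uniformGrid], by simp [uniformGrid, hn'.ne'], fun i _ => ?_⟩
  simp only [uniformGrid, Nat.cast_add, Nat.cast_one]
  gcongr
  linarith

theorem meshLE_uniformGrid (p q : ℝ) (n : ℕ) :
    MeshLE n (uniformGrid p q n) ((q - p) / n) := fun i _ => by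
  simp only [uniformGrid, Nat.cast_add, Nat.cast_one]
  exact le_of_eq (by ring)

theorem uniformGrid_mem (hpq : p ≤ q) {n i : ℕ} (hi : i ≤ n) : uniformGrid p q n i ∈ Icc p q := by
  rcases Nat.eq_zero_or_pos n with rfl | -
  · simp [uniformGrid, hpq]
  have hi' : (i : ℝ) / n ≤ 1 := div_le_one_of_le₀ (by exact_mod_cast hi) (Nat.cast_nonneg n)
  have h0 : 0 ≤ (i : ℝ) / n := by positivity
  simp only [uniformGrid, mul_div_assoc, Set.mem_Icc]
  constructor <;> nlinarith

theorem exists_grid_meshLE (hpq : p ≤ q) (hη : 0 < η) : ∃ m σ, IsGrid p q m σ ∧ MeshLE m σ η := by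
  rcases hpq.eq_or_lt with rfl | hpq
  · exact ⟨0, fun _ => p, ⟨rfl, rfl, by simp⟩, by simp [MeshLE]⟩
  obtain ⟨n, hn⟩ := exists_nat_gt ((q - p) / η)
  have hn0 : (0 : ℝ) < n := lt_trans (by positivity) hn
  refine ⟨n, _, isGrid_uniformGrid hpq (by exact_mod_cast hn0.ne'), fun i hi => ?_⟩
  refine (meshLE_uniformGrid p q n i hi).trans ?_
  rw [div_le_iff₀ hn0]
  rw [div_lt_iff₀ hη] at hn
  linarith

def gridConcat (m : ℕ) (σ σ' : ℕ → ℝ) (i : ℕ) : ℝ := if i ≤ m then σ i else σ' (i - m)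

theorem gridConcat_of_le {i : ℕ} (hi : i ≤ m) : gridConcat m σ σ' i = σ i := if_pos hi

theorem gridConcat_add (hσσ' : σ m = σ' 0) (l : ℕ) : gridConcat m σ σ' (m + l) = σ' l := by
  rcases l with _ | l
  · simp [gridConcat, hσσ']
  · simp [gridConcat]

theorem IsGrid.concat (hσ : IsGrid p q m σ) (hσ' : IsGrid q q' m' σ') :
    IsGrid p q' (m + m') (gridConcat m σ σ') := by
  have hq : σ m = σ' 0 := hσ.2.1.trans hσ'.1.symm
  refine ⟨by rw [gridConcat_of_le (Nat.zero_le m), hσ.1],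
    by rw [gridConcat_add hq, hσ'.2.1], fun i hi => ?_⟩
  rcases lt_or_ge i m with hi' | hi'
  · rw [gridConcat_of_le hi'.le, gridConcat_of_le hi']
    exact hσ.2.2 i hi'
  · obtain ⟨l, rfl⟩ := Nat.exists_eq_add_of_le hi'
    rw [add_assoc, gridConcat_add hq, gridConcat_add hq]
    exact hσ'.2.2 l (by omega)

theorem MeshLE.concat (hσσ' : σ m = σ' 0) (h : MeshLE m σ η) (h' : MeshLE m' σ' η) :
    MeshLE (m + m') (gridConcat m σ σ') η := by
  intro i hi
  rcases lt_or_ge i m with hi' | hi'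
  · rw [gridConcat_of_le hi'.le, gridConcat_of_le hi']
    exact h i hi'
  · obtain ⟨l, rfl⟩ := Nat.exists_eq_add_of_le hi'
    rw [add_assoc, gridConcat_add hσσ', gridConcat_add hσσ']
    exact h' l (by omega)

/-- Removes the point `σ (j + 1)`. -/
def gridErase (σ : ℕ → ℝ) (j : ℕ) (l : ℕ) : ℝ := if l ≤ j then σ l else σ (l + 1)

theorem IsGrid.erase (hu : IsGrid p q (r + 2) u) (hj : j ≤ r) :
    IsGrid p q (r + 1) (gridErase u j) := by
  refine ⟨by simp [gridErase, hu.1], by simp [gridErase, show ¬ r + 1 ≤ j by omega, hu.2.1],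
    fun l hl => ?_⟩
  simp only [gridErase]
  split_ifs
  · exact hu.2.2 l (by omega)
  · exact (hu.2.2 l (by omega)).trans (hu.2.2 (l + 1) (by omega))
  · omega
  · exact hu.2.2 (l + 1) (by omega)

theorem IsGrid.exists_sub_le (hu : IsGrid p q (r + 2) u) :
    ∃ j ≤ r, u (j + 2) - u j ≤ 2 * (q - p) / (r + 1) := by
  have htel : ∀ n, ∑ j ∈ range n, (u (j + 2) - u j) = u (n + 1) + u n - u 1 - u 0 := by
    intro n
    induction n with
    | zero => simp
    | succ n ih => rw [sum_range_succ, ih]; ring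
  have hsum : ∑ j ∈ range (r + 1), (u (j + 2) - u j)
      ≤ ∑ _j ∈ range (r + 1), 2 * (q - p) / (r + 1) := by
    rw [htel, sum_const, card_range, nsmul_eq_mul, Nat.cast_add, Nat.cast_one,
      mul_div_cancel₀ _ (by positivity)]
    have h1 := (hu.mem (i := 1) (by omega)).1
    have h2 := (hu.mem (i := r + 1) (by omega)).2
    linarith [hu.1, hu.2.1]
  obtain ⟨j, hj, hle⟩ := exists_le_of_sum_le ⟨0, by simp⟩ hsum
  exact ⟨j, Nat.lt_succ_iff.mp (mem_range.mp hj), hle⟩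

theorem exists_isGrid_of_finset (A : Finset ℝ) (hp : p ∈ A) (hq : q ∈ A)
    (hA : ∀ x ∈ A, x ∈ Icc p q) : ∃ M ρ, IsGrid p q M ρ ∧ ∀ x ∈ A, ∃ l ≤ M, ρ l = x := by
  have hc : 0 < A.card := card_pos.mpr ⟨p, hp⟩
  set e := A.orderEmbOfFin rfl
  set ρ : ℕ → ℝ := fun l => e ⟨min l (A.card - 1), by omega⟩
  have hmin : A.min' ⟨p, hp⟩ = p := le_antisymm (min'_le A p hp) ((hA _ (min'_mem A _)).1)
  have hmax : A.max' ⟨p, hp⟩ = q := le_antisymm ((hA _ (max'_mem A _)).2) (le_max' A q hq)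
  refine ⟨A.card - 1, ρ, ⟨?_, ?_, fun i hi => ?_⟩, fun x hx => ?_⟩
  · simpa [ρ, e, hmin] using orderEmbOfFin_zero (s := A) rfl hc
  · simpa [ρ, e, hmax] using orderEmbOfFin_last (s := A) rfl hc
  · refine e.strictMono (Fin.mk_lt_mk.mpr ?_)
    omega
  · obtain ⟨⟨l, hl⟩, hlx⟩ : x ∈ Set.range e := by rw [range_orderEmbOfFin]; exact hx
    exact ⟨l, by omega, by simpa [ρ, show min l (A.card - 1) = l by omega] using hlx⟩

theorem exists_common_refinement (hσ : IsGrid p q m σ) (hσ' : IsGrid p q m' σ') :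
    ∃ M ρ, IsGrid p q M ρ ∧ (∀ i ≤ m, ∃ l ≤ M, ρ l = σ i) ∧ ∀ i ≤ m', ∃ l ≤ M, ρ l = σ' i := by
  classical
  set A := (range (m + 1)).image σ ∪ (range (m' + 1)).image σ'
  have hσA : ∀ i ≤ m, σ i ∈ A := fun i hi =>
    mem_union_left _ (mem_image_of_mem σ (mem_range.mpr (by omega)))
  have hσ'A : ∀ i ≤ m', σ' i ∈ A := fun i hi =>
    mem_union_right _ (mem_image_of_mem σ' (mem_range.mpr (by omega)))
  have hA : ∀ x ∈ A, x ∈ Icc p q := by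
    intro x hx
    rcases mem_union.mp hx with hx | hx <;> obtain ⟨i, hi, rfl⟩ := mem_image.mp hx
    exacts [hσ.mem (by simpa [Nat.lt_succ_iff] using hi),
      hσ'.mem (by simpa [Nat.lt_succ_iff] using hi)]
  obtain ⟨M, ρ, hρ, hρA⟩ := exists_isGrid_of_finset A
    (hσ.1 ▸ hσA 0 (Nat.zero_le m)) (hσ.2.1 ▸ hσA m le_rfl) hA
  exact ⟨M, ρ, hρ, fun i hi => hρA _ (hσA i hi), fun i hi => hρA _ (hσ'A i hi)⟩

end Grids

namespace Sewing

section OneParameter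

variable {E : Type*} [NormedAddCommGroup E]

/-- The coboundary `δ` of the paper, for functions of one pair of times. -/
def delta (g : ℝ → ℝ → E) (x u y : ℝ) : E := g u y - g x y + g x u

def gridSum (g : ℝ → ℝ → E) (m : ℕ) (σ : ℕ → ℝ) : E := ∑ i ∈ range m, g (σ i) (σ (i + 1))

theorem gridSum_add (g : ℝ → ℝ → E) (m m' : ℕ) (σ : ℕ → ℝ) :
    gridSum g (m + m') σ = gridSum g m σ + gridSum g m' (fun l => σ (m + l)) := by
  simp only [gridSum, sum_range_add, add_assoc]

theorem gridSum_concat (g : ℝ → ℝ → E) {m m' : ℕ} {σ σ' : ℕ → ℝ} (hσσ' : σ m = σ' 0) :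
    gridSum g (m + m') (gridConcat m σ σ') = gridSum g m σ + gridSum g m' σ' := by
  rw [gridSum_add]
  congr 1
  · refine sum_congr rfl fun i hi => ?_
    have hi : i < m := mem_range.mp hi
    rw [gridConcat_of_le hi.le, gridConcat_of_le hi]
  · simp only [gridConcat_add hσσ']

variable {r j : ℕ} {u : ℕ → ℝ}

theorem gridSum_eq_gridSum_gridErase_add (g : ℝ → ℝ → E) (hj : j ≤ r) :
    gridSum g (r + 2) u
      = gridSum g (r + 1) (gridErase u j) + delta g (u j) (u (j + 1)) (u (j + 2)) := by
  obtain ⟨k, rfl⟩ := Nat.exists_eq_add_of_le hj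
  have hu : gridSum g (j + k + 2) u = gridSum g j u
      + (g (u j) (u (j + 1)) + g (u (j + 1)) (u (j + 2)))
      + gridSum g k (fun l => u (j + 2 + l)) := by
    rw [show j + k + 2 = j + 2 + k by omega, gridSum_add, gridSum_add]
    simp [gridSum, sum_range_succ, add_assoc]
  have hv : gridSum g (j + k + 1) (gridErase u j) = gridSum g j u
      + g (u j) (u (j + 2)) + gridSum g k (fun l => u (j + 2 + l)) := by
    rw [show j + k + 1 = j + 1 + k by omega, gridSum_add, gridSum_add]
    congr 1
    congr 1
    · refine sum_congr rfl fun l hl => ?_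
      have hl : l < j := mem_range.mp hl
      simp only [gridErase, if_pos hl.le, if_pos (show l + 1 ≤ j by omega)]
    · simp [gridSum, gridErase]
    · refine sum_congr rfl fun l _ => ?_
      simp only [gridErase, if_neg (show ¬ j + 1 + l ≤ j by omega),
        if_neg (show ¬ j + 1 + (l + 1) ≤ j by omega)]
      ring_nf
  rw [hu, hv, delta]
  abel

end OneParameter

section Young

variable {E : Type*} [NormedAddCommGroup E] {g : ℝ → ℝ → E} {p q z D : ℝ} {r : ℕ}
  {u : ℕ → ℝ}

/-- Each step deletes the point `u (j + 1)` given by `IsGrid.exists_sub_le`. -/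
theorem norm_gridSum_sub_le_sum (hz : 0 < z) (hD : 0 ≤ D)
    (hg : ∀ x w y, p ≤ x → x ≤ w → w ≤ y → y ≤ q → ‖delta g x w y‖ ≤ D * (y - x) ^ z) :
    ∀ (r : ℕ) (u : ℕ → ℝ), IsGrid p q r u →
      ‖gridSum g r u - g p q‖ ≤ D * (2 * (q - p)) ^ z * ∑ j ∈ range r, ((j : ℝ) ^ z)⁻¹
  | 0, u, hu => by
    obtain rfl : p = q := hu.1.symm.trans hu.2.1
    have hpp := hg p p p le_rfl le_rfl le_rfl le_rfl
    simp only [delta, sub_self, zero_add, Real.zero_rpow hz.ne', mul_zero] at hpp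
    simpa [gridSum] using hpp
  | 1, u, hu => by simp [gridSum, hu.1, hu.2.1, Real.zero_rpow hz.ne']
  | r + 2, u, hu => by
    obtain ⟨j, hj, hgap⟩ := hu.exists_sub_le
    have ih := norm_gridSum_sub_le_sum hz hD hg (r + 1) _ (hu.erase hj)
    have hdelta : ‖delta g (u j) (u (j + 1)) (u (j + 2))‖
        ≤ D * (2 * (q - p)) ^ z * (((r + 1 : ℕ) : ℝ) ^ z)⁻¹ := by
      refine (hg _ _ _ (hu.mem (i := j) (by omega)).1 (hu.2.2 j (by omega)).le
        (hu.2.2 (j + 1) (by omega)).le (hu.mem (i := j + 2) (by omega)).2).trans ?_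
      rw [mul_assoc, ← Real.inv_rpow (by positivity),
        ← Real.mul_rpow (by linarith [hu.le]) (by positivity)]
      gcongr
      · exact sub_nonneg.mpr ((hu.2.2 j (by omega)).trans (hu.2.2 (j + 1) (by omega))).le
      · simpa [div_eq_mul_inv] using hgap
    calc ‖gridSum g (r + 2) u - g p q‖
        = ‖(gridSum g (r + 1) (gridErase u j) - g p q)
            + delta g (u j) (u (j + 1)) (u (j + 2))‖ := by
          rw [gridSum_eq_gridSum_gridErase_add g hj]
          abel_nf
      _ ≤ D * (2 * (q - p)) ^ z * ∑ j ∈ range (r + 1), ((j : ℝ) ^ z)⁻¹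
            + D * (2 * (q - p)) ^ z * (((r + 1 : ℕ) : ℝ) ^ z)⁻¹ :=
          (norm_add_le _ _).trans (add_le_add ih hdelta)
      _ = D * (2 * (q - p)) ^ z * ∑ j ∈ range (r + 2), ((j : ℝ) ^ z)⁻¹ := by
          rw [sum_range_succ _ (r + 1), mul_add]

noncomputable def youngConst (z : ℝ) : ℝ := 2 ^ z * ∑' n : ℕ, ((n : ℝ) ^ z)⁻¹

theorem youngConst_nonneg (z : ℝ) : 0 ≤ youngConst z :=
  mul_nonneg (by positivity) (tsum_nonneg fun n => by positivity)

theorem norm_gridSum_sub_le (hz : 1 < z) (hD : 0 ≤ D)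
    (hg : ∀ x w y, p ≤ x → x ≤ w → w ≤ y → y ≤ q → ‖delta g x w y‖ ≤ D * (y - x) ^ z)
    (hu : IsGrid p q r u) : ‖gridSum g r u - g p q‖ ≤ D * youngConst z * (q - p) ^ z := by
  have hsum := (Real.summable_nat_rpow_inv.mpr hz).sum_le_tsum (range r) (fun n _ => by positivity)
  calc ‖gridSum g r u - g p q‖ ≤ D * (2 * (q - p)) ^ z * ∑ j ∈ range r, ((j : ℝ) ^ z)⁻¹ :=
        norm_gridSum_sub_le_sum (by linarith) hD hg r u hu
    _ = D * 2 ^ z * (q - p) ^ z * ∑ j ∈ range r, ((j : ℝ) ^ z)⁻¹ := by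
        rw [Real.mul_rpow (by norm_num) (sub_nonneg.mpr hu.le)]
        ring
    _ ≤ D * 2 ^ z * (q - p) ^ z * ∑' n : ℕ, ((n : ℝ) ^ z)⁻¹ := by
        gcongr
        exact mul_nonneg (mul_nonneg hD (by positivity)) (Real.rpow_nonneg (sub_nonneg.mpr hu.le) z)
    _ = D * youngConst z * (q - p) ^ z := by rw [youngConst]; ring

theorem norm_gridSum_le (hz : 1 < z) (hD : 0 ≤ D)
    (hg : ∀ x w y, p ≤ x → x ≤ w → w ≤ y → y ≤ q → ‖delta g x w y‖ ≤ D * (y - x) ^ z)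
    (hu : IsGrid p q r u) : ‖gridSum g r u‖ ≤ ‖g p q‖ + D * youngConst z * (q - p) ^ z :=
  (norm_le_norm_add_norm_sub' _ (g p q)).trans
    (add_le_add_right (norm_gridSum_sub_le hz hD hg hu) _)

theorem gridSum_eq_sum_gridSum_blocks (g : ℝ → ℝ → E) (ρ : ℕ → ℝ) {φ : ℕ → ℕ} (h0 : φ 0 = 0) :
    ∀ m, (∀ i < m, φ i ≤ φ (i + 1)) →
      gridSum g (φ m) ρ = ∑ i ∈ range m, gridSum g (φ (i + 1) - φ i) (fun l => ρ (φ i + l))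
  | 0, _ => by simp [h0, gridSum]
  | m + 1, hφ => by
    rw [sum_range_succ, ← gridSum_eq_sum_gridSum_blocks g ρ h0 m (fun i hi => hφ i (by omega)),
      ← gridSum_add, Nat.add_sub_cancel' (hφ m (by omega))]

/-- Young's inequality on each block of `ρ` between consecutive points of `σ`. -/
theorem norm_gridSum_sub_gridSum_le_of_refines {m M : ℕ} {σ ρ : ℕ → ℝ} {η : ℝ} (hz : 1 < z)
    (hD : 0 ≤ D)
    (hg : ∀ x w y, p ≤ x → x ≤ w → w ≤ y → y ≤ q → ‖delta g x w y‖ ≤ D * (y - x) ^ z)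
    (hσ : IsGrid p q m σ) (hmesh : MeshLE m σ η) (hρ : IsGrid p q M ρ)
    (hρσ : ∀ i ≤ m, ∃ l ≤ M, ρ l = σ i) :
    ‖gridSum g M ρ - gridSum g m σ‖ ≤ D * youngConst z * ((q - p) * η ^ (z - 1)) := by
  choose! φ hφM hφ using hρσ
  have hρmono := hρ.strictMonoOn
  have hφmono : ∀ i < m, φ i ≤ φ (i + 1) := fun i hi =>
    ((hρmono.lt_iff_lt (hφM i hi.le) (hφM (i + 1) hi)).mp
      (by rw [hφ i hi.le, hφ (i + 1) hi]; exact hσ.2.2 i hi)).le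
  have hφ0 : φ 0 = 0 := hρmono.injOn (hφM 0 (Nat.zero_le m)) (Nat.zero_le M)
    (by rw [hφ 0 (Nat.zero_le m), hσ.1, hρ.1])
  have hφm : φ m = M := hρmono.injOn (hφM m le_rfl) (le_refl M)
    (by rw [hφ m le_rfl, hσ.2.1, hρ.2.1])
  have hblock : ∀ i < m, ‖gridSum g (φ (i + 1) - φ i) (fun l => ρ (φ i + l)) - g (σ i) (σ (i + 1))‖
      ≤ D * youngConst z * (σ (i + 1) - σ i) ^ z := by
    intro i hi
    have hgrid := hρ.restrict (hφmono i hi) (hφM (i + 1) hi)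
    rw [hφ i hi.le, hφ (i + 1) hi] at hgrid
    exact norm_gridSum_sub_le hz hD (fun x w y hx hxw hwy hy =>
      hg x w y ((hσ.mem hi.le).1.trans hx) hxw hwy (hy.trans (hσ.mem hi).2)) hgrid
  calc ‖gridSum g M ρ - gridSum g m σ‖
      = ‖∑ i ∈ range m,
          (gridSum g (φ (i + 1) - φ i) (fun l => ρ (φ i + l)) - g (σ i) (σ (i + 1)))‖ := by
        rw [← hφm, gridSum_eq_sum_gridSum_blocks g ρ hφ0 m hφmono, sum_sub_distrib]
        rfl
    _ ≤ ∑ i ∈ range m, D * youngConst z * (σ (i + 1) - σ i) ^ z :=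
        norm_sum_le_of_le _ fun i hi => hblock i (mem_range.mp hi)
    _ ≤ D * youngConst z * ((q - p) * η ^ (z - 1)) := by
        rw [← mul_sum]
        exact mul_le_mul_of_nonneg_left (sum_rpow_sub_le hz.le hσ hmesh)
          (mul_nonneg hD (youngConst_nonneg z))

end Young

section Decompositions

theorem norm_le_of_eq_sum {E ι : Type*} [NormedAddCommGroup E] [Fintype ι] {v : E} {h : ι → E}
    {C : ι → ℝ} {W : ℝ} (hv : v = ∑ k, h k) (hh : ∀ k, ‖h k‖ ≤ C k * W) :
    ‖v‖ ≤ (∑ k, C k) * W := by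
  rw [hv, sum_mul]
  exact norm_sum_le_of_le _ fun k _ => hh k

variable {C x u y γ z : ℝ}

theorem abs_sub_rpow_mul_abs_sub_rpow_le (hxu : x ≤ u) (huy : u ≤ y) (hγ : γ ∈ Ioo 0 z) :
    |u - x| ^ γ * |y - u| ^ (z - γ) ≤ (y - x) ^ z := by
  rw [abs_of_nonneg (sub_nonneg.mpr hxu), abs_of_nonneg (sub_nonneg.mpr huy)]
  calc (u - x) ^ γ * (y - u) ^ (z - γ) ≤ (y - x) ^ γ * (y - x) ^ (z - γ) :=
        mul_le_mul (Real.rpow_le_rpow (sub_nonneg.mpr hxu) (by linarith) hγ.1.le)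
          (Real.rpow_le_rpow (sub_nonneg.mpr huy) (by linarith) (by linarith [hγ.2]))
          (Real.rpow_nonneg (sub_nonneg.mpr huy) _) (Real.rpow_nonneg (by linarith) _)
    _ = (y - x) ^ z := by
        rw [← Real.rpow_add' (by linarith) (by linarith [hγ.1, hγ.2]), add_sub_cancel]

theorem mul_abs_sub_rpow_mul_abs_sub_rpow_le (hC : 0 ≤ C) (hxu : x ≤ u) (huy : u ≤ y)
    (hγ : γ ∈ Ioo 0 z) : C * |u - x| ^ γ * |y - u| ^ (z - γ) ≤ C * (y - x) ^ z := by
  rw [mul_assoc]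
  exact mul_le_mul_of_nonneg_left (abs_sub_rpow_mul_abs_sub_rpow_le hxu huy hγ) hC

theorem mul_abs_sub_rpow_mul_abs_sub_rpow_le₂ {t₁ v t₂ γ' z' : ℝ} (hC : 0 ≤ C) (hxu : x ≤ u)
    (huy : u ≤ y) (ht₁v : t₁ ≤ v) (hvt₂ : v ≤ t₂) (hγ : γ ∈ Ioo 0 z) (hγ' : γ' ∈ Ioo 0 z') :
    C * |u - x| ^ γ * |y - u| ^ (z - γ) * |v - t₁| ^ γ' * |t₂ - v| ^ (z' - γ')
      ≤ C * ((y - x) ^ z * (t₂ - t₁) ^ z') := by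
  calc C * |u - x| ^ γ * |y - u| ^ (z - γ) * |v - t₁| ^ γ' * |t₂ - v| ^ (z' - γ')
      = C * ((|u - x| ^ γ * |y - u| ^ (z - γ)) * (|v - t₁| ^ γ' * |t₂ - v| ^ (z' - γ'))) := by ring
    _ ≤ C * ((y - x) ^ z * (t₂ - t₁) ^ z') :=
        mul_le_mul_of_nonneg_left (mul_le_mul (abs_sub_rpow_mul_abs_sub_rpow_le hxu huy hγ)
          (abs_sub_rpow_mul_abs_sub_rpow_le ht₁v hvt₂ hγ') (by positivity)
          (Real.rpow_nonneg (by linarith) _)) hC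

end Decompositions

section TwoParameter

variable {V : Type*} [NormedAddCommGroup V] {a : ℝ → ℝ → ℝ → ℝ → V}
  {T z₁ z₂ B₁ B₂ B₃ η s s' t t' : ℝ} {m n M N : ℕ} {σ τ ρ θ : ℕ → ℝ}

def riemannSum (a : ℝ → ℝ → ℝ → ℝ → V) (m : ℕ) (σ : ℕ → ℝ) (n : ℕ) (τ : ℕ → ℝ) : V :=
  gridSum (fun x y => gridSum (a x y) n τ) m σ

def transpose (a : ℝ → ℝ → ℝ → ℝ → V) : ℝ → ℝ → ℝ → ℝ → V := fun t₁ t₂ s₁ s₂ => a s₁ s₂ t₁ t₂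

theorem riemannSum_transpose : riemannSum (transpose a) n τ m σ = riemannSum a m σ n τ := by
  simp only [riemannSum, gridSum, transpose]
  exact sum_comm

theorem riemannSum_concat {m' : ℕ} {σ' : ℕ → ℝ} (hσσ' : σ m = σ' 0) :
    riemannSum a (m + m') (gridConcat m σ σ') n τ = riemannSum a m σ n τ + riemannSum a m' σ' n τ :=
  gridSum_concat _ hσσ'

theorem delta_gridSum (x u y : ℝ) :
    delta (fun x y => gridSum (a x y) n τ) x u y = gridSum (del1 a x u y) n τ := by
  simp only [delta, gridSum, del1, sum_add_distrib, sum_sub_distrib]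

/-- Hypotheses (i)–(iii) in the form the sewing argument uses; the decompositions give them with
`Bᵢ` the sum of the constants `C_k`. -/
structure SewingBounds (a : ℝ → ℝ → ℝ → ℝ → V) (T z₁ z₂ B₁ B₂ B₃ : ℝ) : Prop where
  nonneg₁ : 0 ≤ B₁
  nonneg₂ : 0 ≤ B₂
  nonneg₃ : 0 ≤ B₃
  norm_del1_le : ∀ x u y t₁ t₂, x ∈ Icc 0 T → u ∈ Icc 0 T → y ∈ Icc 0 T → t₁ ∈ Icc 0 T →
    t₂ ∈ Icc 0 T → x ≤ u → u ≤ y → ‖del1 a x u y t₁ t₂‖ ≤ B₁ * (y - x) ^ z₁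
  norm_del2_le : ∀ s₁ s₂ t₁ v t₂, s₁ ∈ Icc 0 T → s₂ ∈ Icc 0 T → t₁ ∈ Icc 0 T → v ∈ Icc 0 T →
    t₂ ∈ Icc 0 T → t₁ ≤ v → v ≤ t₂ → ‖del2 a s₁ s₂ t₁ v t₂‖ ≤ B₂ * (t₂ - t₁) ^ z₂
  norm_delFull_le : ∀ x u y t₁ v t₂, x ∈ Icc 0 T → u ∈ Icc 0 T → y ∈ Icc 0 T → t₁ ∈ Icc 0 T →
    v ∈ Icc 0 T → t₂ ∈ Icc 0 T → x ≤ u → u ≤ y → t₁ ≤ v → v ≤ t₂ →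
    ‖delFull a x u y t₁ v t₂‖ ≤ B₃ * (y - x) ^ z₁ * (t₂ - t₁) ^ z₂

theorem SewingBounds.transpose (hb : SewingBounds a T z₁ z₂ B₁ B₂ B₃) :
    SewingBounds (transpose a) T z₂ z₁ B₂ B₁ B₃ where
  nonneg₁ := hb.nonneg₂
  nonneg₂ := hb.nonneg₁
  nonneg₃ := hb.nonneg₃
  norm_del1_le x u y t₁ t₂ hx hu hy ht₁ ht₂ hxu huy :=
    hb.norm_del2_le t₁ t₂ x u y ht₁ ht₂ hx hu hy hxu huy
  norm_del2_le s₁ s₂ t₁ v t₂ hs₁ hs₂ ht₁ hv ht₂ ht₁v hvt₂ :=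
    hb.norm_del1_le t₁ v t₂ s₁ s₂ ht₁ hv ht₂ hs₁ hs₂ ht₁v hvt₂
  norm_delFull_le x u y t₁ v t₂ hx hu hy ht₁ hv ht₂ hxu huy ht₁v hvt₂ := by
    have h := hb.norm_delFull_le t₁ v t₂ x u y ht₁ hv ht₂ hx hu hy ht₁v hvt₂ hxu huy
    have e : delFull (Sewing.transpose a) x u y t₁ v t₂ = delFull a t₁ v t₂ x u y := by
      simp only [delFull, del1, Sewing.transpose]
      abel
    rwa [e, mul_right_comm]

/-- The cost of refining, in the first variable, a grid of mesh `η`; its constant is the one of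
`SewingBounds.norm_delta_gridSum_le`. -/
noncomputable def refinementError (T z₁ z₂ B₁ B₃ η : ℝ) : ℝ :=
  (B₁ + B₃ * youngConst z₂ * T ^ z₂) * youngConst z₁ * (T * η ^ (z₁ - 1))

noncomputable def gridError (T z₁ z₂ B₁ B₂ B₃ η : ℝ) : ℝ :=
  refinementError T z₁ z₂ B₁ B₃ η + refinementError T z₂ z₁ B₂ B₃ η

theorem SewingBounds.norm_delta_gridSum_le (hz₂ : 1 < z₂) (hb : SewingBounds a T z₁ z₂ B₁ B₂ B₃)
    (ht : 0 ≤ t) (ht' : t' ≤ T) (hτ : IsGrid t t' n τ) {x u y : ℝ} (hx : 0 ≤ x) (hxu : x ≤ u)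
    (huy : u ≤ y) (hy : y ≤ T) :
    ‖delta (fun x y => gridSum (a x y) n τ) x u y‖
      ≤ (B₁ + B₃ * youngConst z₂ * T ^ z₂) * (y - x) ^ z₁ := by
  have hxI : x ∈ Icc 0 T := ⟨hx, by linarith⟩
  have huI : u ∈ Icc 0 T := ⟨by linarith, by linarith⟩
  have hyI : y ∈ Icc 0 T := ⟨by linarith, hy⟩
  have htt' := hτ.le
  have hyx : 0 ≤ (y - x) ^ z₁ := Real.rpow_nonneg (by linarith) _
  rw [delta_gridSum]
  calc ‖gridSum (del1 a x u y) n τ‖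
      ≤ ‖del1 a x u y t t'‖ + B₃ * (y - x) ^ z₁ * youngConst z₂ * (t' - t) ^ z₂ :=
        norm_gridSum_le hz₂ (mul_nonneg hb.nonneg₃ hyx)
          (fun t₁ v t₂ ht₁ ht₁v hvt₂ ht₂ => hb.norm_delFull_le x u y t₁ v t₂ hxI huI hyI
            ⟨by linarith, by linarith⟩ ⟨by linarith, by linarith⟩ ⟨by linarith, by linarith⟩
            hxu huy ht₁v hvt₂) hτ
    _ ≤ B₁ * (y - x) ^ z₁ + B₃ * (y - x) ^ z₁ * youngConst z₂ * T ^ z₂ := by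
        gcongr
        · exact hb.norm_del1_le x u y t t' hxI huI hyI ⟨ht, by linarith⟩ ⟨by linarith, ht'⟩ hxu huy
        · exact mul_nonneg (mul_nonneg hb.nonneg₃ hyx) (youngConst_nonneg z₂)
        · linarith
    _ = (B₁ + B₃ * youngConst z₂ * T ^ z₂) * (y - x) ^ z₁ := by ring

theorem SewingBounds.norm_riemannSum_sub_le_of_refines_left (hz₁ : 1 < z₁) (hz₂ : 1 < z₂)
    (hb : SewingBounds a T z₁ z₂ B₁ B₂ B₃) (hs : 0 ≤ s) (hs' : s' ≤ T) (ht : 0 ≤ t) (ht' : t' ≤ T)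
    (hη : 0 ≤ η) (hσ : IsGrid s s' m σ) (hmesh : MeshLE m σ η) (hρ : IsGrid s s' M ρ)
    (hρσ : ∀ i ≤ m, ∃ l ≤ M, ρ l = σ i) (hτ : IsGrid t t' n τ) :
    ‖riemannSum a M ρ n τ - riemannSum a m σ n τ‖ ≤ refinementError T z₁ z₂ B₁ B₃ η := by
  have hD : 0 ≤ B₁ + B₃ * youngConst z₂ * T ^ z₂ :=
    add_nonneg hb.nonneg₁ (mul_nonneg (mul_nonneg hb.nonneg₃ (youngConst_nonneg z₂))
      (Real.rpow_nonneg (by linarith [hσ.le]) z₂))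
  have hdelta := fun x u y (hx : s ≤ x) (hxu : x ≤ u) (huy : u ≤ y) (hy : y ≤ s') =>
    hb.norm_delta_gridSum_le hz₂ ht ht' hτ (by linarith) hxu huy (by linarith)
  refine (norm_gridSum_sub_gridSum_le_of_refines hz₁ hD hdelta hσ hmesh hρ hρσ).trans ?_
  rw [refinementError]
  gcongr
  · exact mul_nonneg hD (youngConst_nonneg z₁)
  · linarith

theorem SewingBounds.norm_riemannSum_sub_le_of_refines_right (hz₁ : 1 < z₁) (hz₂ : 1 < z₂)
    (hb : SewingBounds a T z₁ z₂ B₁ B₂ B₃) (hs : 0 ≤ s) (hs' : s' ≤ T) (ht : 0 ≤ t) (ht' : t' ≤ T)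
    (hη : 0 ≤ η) (hσ : IsGrid s s' m σ) (hτ : IsGrid t t' n τ) (hmesh : MeshLE n τ η)
    (hθ : IsGrid t t' N θ) (hθτ : ∀ j ≤ n, ∃ l ≤ N, θ l = τ j) :
    ‖riemannSum a m σ N θ - riemannSum a m σ n τ‖ ≤ refinementError T z₂ z₁ B₂ B₃ η := by
  rw [← riemannSum_transpose, ← riemannSum_transpose (a := a)]
  exact hb.transpose.norm_riemannSum_sub_le_of_refines_left hz₂ hz₁ ht ht' hs hs' hη hτ hmesh hθ
    hθτ hσ

theorem SewingBounds.norm_riemannSum_sub_le_of_refines (hz₁ : 1 < z₁) (hz₂ : 1 < z₂)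
    (hb : SewingBounds a T z₁ z₂ B₁ B₂ B₃) (hs : 0 ≤ s) (hs' : s' ≤ T) (ht : 0 ≤ t) (ht' : t' ≤ T)
    (hη : 0 ≤ η) (hσ : IsGrid s s' m σ) (hτ : IsGrid t t' n τ) (hmσ : MeshLE m σ η)
    (hmτ : MeshLE n τ η) (hρ : IsGrid s s' M ρ) (hρσ : ∀ i ≤ m, ∃ l ≤ M, ρ l = σ i)
    (hθ : IsGrid t t' N θ) (hθτ : ∀ j ≤ n, ∃ l ≤ N, θ l = τ j) :
    ‖riemannSum a M ρ N θ - riemannSum a m σ n τ‖ ≤ gridError T z₁ z₂ B₁ B₂ B₃ η := by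
  rw [gridError, add_comm]
  refine (norm_sub_le_norm_sub_add_norm_sub _ (riemannSum a M ρ n τ) _).trans (add_le_add ?_ ?_)
  · exact hb.norm_riemannSum_sub_le_of_refines_right hz₁ hz₂ hs hs' ht ht' hη hρ hτ hmτ hθ hθτ
  · exact hb.norm_riemannSum_sub_le_of_refines_left hz₁ hz₂ hs hs' ht ht' hη hσ hmσ hρ hρσ hτ

/-- Compare both Riemann sums with the one over common refinements. -/
theorem SewingBounds.norm_riemannSum_sub_riemannSum_le (hz₁ : 1 < z₁) (hz₂ : 1 < z₂)
    (hb : SewingBounds a T z₁ z₂ B₁ B₂ B₃) (hs : 0 ≤ s) (hs' : s' ≤ T) (ht : 0 ≤ t) (ht' : t' ≤ T)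
    {η' : ℝ} {m' n' : ℕ} {σ' τ' : ℕ → ℝ} (hη : 0 ≤ η) (hη' : 0 ≤ η')
    (hσ : IsGrid s s' m σ) (hτ : IsGrid t t' n τ) (hmσ : MeshLE m σ η) (hmτ : MeshLE n τ η)
    (hσ' : IsGrid s s' m' σ') (hτ' : IsGrid t t' n' τ') (hmσ' : MeshLE m' σ' η')
    (hmτ' : MeshLE n' τ' η') :
    ‖riemannSum a m σ n τ - riemannSum a m' σ' n' τ'‖
      ≤ gridError T z₁ z₂ B₁ B₂ B₃ η + gridError T z₁ z₂ B₁ B₂ B₃ η' := by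
  obtain ⟨M, ρ, hρ, hρσ, hρσ'⟩ := exists_common_refinement hσ hσ'
  obtain ⟨N, θ, hθ, hθτ, hθτ'⟩ := exists_common_refinement hτ hτ'
  refine (norm_sub_le_norm_sub_add_norm_sub _ (riemannSum a M ρ N θ) _).trans (add_le_add ?_ ?_)
  · rw [norm_sub_rev]
    exact hb.norm_riemannSum_sub_le_of_refines hz₁ hz₂ hs hs' ht ht' hη hσ hτ hmσ hmτ hρ hρσ hθ hθτ
  · exact hb.norm_riemannSum_sub_le_of_refines hz₁ hz₂ hs hs' ht ht' hη' hσ' hτ' hmσ' hmτ' hρ hρσ'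
      hθ hθτ'

end TwoParameter

section Limits

theorem tendsto_div_natCast_succ_nhdsGT {c : ℝ} (hc : 0 < c) :
    Tendsto (fun k : ℕ => c / ((k + 1 : ℕ) : ℝ)) atTop (𝓝[>] 0) := by
  refine tendsto_nhdsWithin_iff.mpr ⟨?_, Eventually.of_forall fun k => mem_Ioi.mpr (by positivity)⟩
  exact (tendsto_const_div_atTop_nhds_zero_nat c).comp (tendsto_add_atTop_nat 1)

theorem eq_zero_of_forall_norm_le {E : Type*} [NormedAddCommGroup E] {ω : ℝ → ℝ}
    (hω : Tendsto ω (𝓝[>] 0) (𝓝 0)) {x : E} (c : ℝ) (h : ∀ η > 0, ‖x‖ ≤ c * ω η) : x = 0 := by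
  have := le_of_tendsto_of_tendsto tendsto_const_nhds (hω.const_mul c)
    (eventually_nhdsWithin_of_forall h)
  simpa using this

theorem exists_forall_norm_sub_le {E : Type*} [NormedAddCommGroup E] [CompleteSpace E]
    (P : ℝ → E → Prop) {ω : ℝ → ℝ} (hω : Tendsto ω (𝓝[>] 0) (𝓝 0)) (hP : ∀ η > 0, ∃ x, P η x)
    (hclose : ∀ η η' x x', P η x → P η' x' → ‖x - x'‖ ≤ ω η + ω η') :
    ∃ L, ∀ η x, P η x → ‖x - L‖ ≤ ω η := by
  choose x hx using hP
  set y : ℕ → E := fun k => x (1 / ((k + 1 : ℕ) : ℝ)) (by positivity)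
  have hωk : Tendsto (fun k : ℕ => ω (1 / ((k + 1 : ℕ) : ℝ))) atTop (𝓝 0) :=
    hω.comp (tendsto_div_natCast_succ_nhdsGT one_pos)
  have hy : CauchySeq y := by
    refine Metric.cauchySeq_iff'.mpr fun ε hε => ?_
    obtain ⟨N, hN⟩ := eventually_atTop.mp (hωk.eventually (gt_mem_nhds (half_pos hε)))
    refine ⟨N, fun k hk => ?_⟩
    rw [dist_eq_norm]
    calc ‖y k - y N‖ ≤ ω (1 / ((k + 1 : ℕ) : ℝ)) + ω (1 / ((N + 1 : ℕ) : ℝ)) :=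
          hclose _ _ _ _ (hx _ _) (hx _ _)
      _ < ε / 2 + ε / 2 := add_lt_add (hN k hk) (hN N le_rfl)
      _ = ε := add_halves ε
  obtain ⟨L, hL⟩ := cauchySeq_tendsto_of_complete hy
  refine ⟨L, fun η z hz => ?_⟩
  have := le_of_tendsto_of_tendsto' (tendsto_const_nhds.sub hL).norm
    (tendsto_const_nhds.add hωk) fun k => hclose _ _ _ _ hz (hx _ _)
  simpa using this

variable {V : Type*} [NormedAddCommGroup V] {a : ℝ → ℝ → ℝ → ℝ → V} {ω : ℝ → ℝ}
  {s s' s'' t t' t'' : ℝ} {L L₁ L₂ : V}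

def RiemannApprox (a : ℝ → ℝ → ℝ → ℝ → V) (ω : ℝ → ℝ) (s s' t t' : ℝ) (L : V) : Prop :=
  ∀ η > 0, ∀ m n σ τ, IsGrid s s' m σ → IsGrid t t' n τ → MeshLE m σ η → MeshLE n τ η →
    ‖riemannSum a m σ n τ - L‖ ≤ ω η

theorem riemannApprox_transpose_iff :
    RiemannApprox (transpose a) ω t t' s s' L ↔ RiemannApprox a ω s s' t t' L := by
  constructor <;> intro h η hη m n σ τ hσ hτ hmσ hmτ
  · simpa only [riemannSum_transpose] using h η hη n m τ σ hτ hσ hmτ hmσ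
  · simpa only [riemannSum_transpose] using h η hη n m τ σ hτ hσ hmτ hmσ

theorem RiemannApprox.exists_forall_le (hω : Tendsto ω (𝓝[>] 0) (𝓝 0))
    (h : RiemannApprox a ω s s' t t' L) {ε : ℝ} (hε : 0 < ε) :
    ∃ η > 0, ∀ m n σ τ, IsGrid s s' m σ → IsGrid t t' n τ → MeshLE m σ η → MeshLE n τ η →
      ‖riemannSum a m σ n τ - L‖ ≤ ε := by
  obtain ⟨η, hωη, hη⟩ := ((hω.eventually (ge_mem_nhds hε)).and self_mem_nhdsWithin).exists
  exact ⟨η, hη, fun m n σ τ hσ hτ hmσ hmτ => (h η hη m n σ τ hσ hτ hmσ hmτ).trans hωη⟩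

theorem RiemannApprox.eq_zero_left (hω : Tendsto ω (𝓝[>] 0) (𝓝 0)) (htt' : t ≤ t')
    (h : RiemannApprox a ω s s t t' L) : L = 0 := by
  refine eq_zero_of_forall_norm_le hω 1 fun η hη => ?_
  obtain ⟨n, τ, hτ, hmτ⟩ := exists_grid_meshLE htt' hη
  simpa [riemannSum, gridSum] using
    h η hη 0 n (fun _ => s) τ ⟨rfl, rfl, by simp⟩ hτ (by simp [MeshLE]) hmτ

theorem RiemannApprox.eq_zero_right (hω : Tendsto ω (𝓝[>] 0) (𝓝 0)) (hss' : s ≤ s')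
    (h : RiemannApprox a ω s s' t t L) : L = 0 :=
  (riemannApprox_transpose_iff.mpr h).eq_zero_left hω hss'

/-- Concatenate fine grids of `[s, s']` and `[s', s'']`. -/
theorem RiemannApprox.eq_add_left (hω : Tendsto ω (𝓝[>] 0) (𝓝 0)) (hss' : s ≤ s')
    (hs's'' : s' ≤ s'') (htt' : t ≤ t') (h : RiemannApprox a ω s s'' t t' L)
    (h₁ : RiemannApprox a ω s s' t t' L₁) (h₂ : RiemannApprox a ω s' s'' t t' L₂) :
    L = L₁ + L₂ := by
  rw [← sub_eq_zero]
  refine eq_zero_of_forall_norm_le hω 3 fun η hη => ?_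
  obtain ⟨m₁, σ₁, hσ₁, hm₁⟩ := exists_grid_meshLE hss' hη
  obtain ⟨m₂, σ₂, hσ₂, hm₂⟩ := exists_grid_meshLE hs's'' hη
  obtain ⟨n, τ, hτ, hmτ⟩ := exists_grid_meshLE htt' hη
  have hjoin : σ₁ m₁ = σ₂ 0 := hσ₁.2.1.trans hσ₂.1.symm
  have e := h η hη _ n _ τ (hσ₁.concat hσ₂) hτ (hm₁.concat hjoin hm₂) hmτ
  have e₁ := h₁ η hη m₁ n σ₁ τ hσ₁ hτ hm₁ hmτ
  have e₂ := h₂ η hη m₂ n σ₂ τ hσ₂ hτ hm₂ hmτ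
  rw [riemannSum_concat hjoin] at e
  set S₁ := riemannSum a m₁ σ₁ n τ
  set S₂ := riemannSum a m₂ σ₂ n τ
  calc ‖L - (L₁ + L₂)‖ = ‖(S₁ - L₁) + (S₂ - L₂) - (S₁ + S₂ - L)‖ := by abel_nf
    _ ≤ ‖S₁ - L₁‖ + ‖S₂ - L₂‖ + ‖S₁ + S₂ - L‖ :=
        (norm_sub_le _ _).trans (add_le_add_left (norm_add_le _ _) _)
    _ ≤ 3 * ω η := by linarith

theorem RiemannApprox.eq_add_right (hω : Tendsto ω (𝓝[>] 0) (𝓝 0)) (hss' : s ≤ s')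
    (htt' : t ≤ t') (ht't'' : t' ≤ t'') (h : RiemannApprox a ω s s' t t'' L)
    (h₁ : RiemannApprox a ω s s' t t' L₁) (h₂ : RiemannApprox a ω s s' t' t'' L₂) :
    L = L₁ + L₂ :=
  (riemannApprox_transpose_iff.mpr h).eq_add_left hω htt' ht't'' hss'
    (riemannApprox_transpose_iff.mpr h₁) (riemannApprox_transpose_iff.mpr h₂)

end Limits

section Existence

variable {V : Type*} [NormedAddCommGroup V] {a : ℝ → ℝ → ℝ → ℝ → V} {T z₁ z₂ B₁ B₂ B₃ : ℝ}

theorem tendsto_refinementError (hz₁ : 1 < z₁) :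
    Tendsto (refinementError T z₁ z₂ B₁ B₃) (𝓝[>] 0) (𝓝 0) := by
  have h : Tendsto (fun η : ℝ => η ^ (z₁ - 1)) (𝓝 0) (𝓝 0) := by
    simpa [Real.zero_rpow (by linarith : z₁ - 1 ≠ 0)] using
      (Real.continuousAt_rpow_const 0 (z₁ - 1) (Or.inr (by linarith))).tendsto
  unfold refinementError
  simpa using ((h.const_mul T).const_mul _).mono_left nhdsWithin_le_nhds

theorem tendsto_gridError (hz₁ : 1 < z₁) (hz₂ : 1 < z₂) :
    Tendsto (gridError T z₁ z₂ B₁ B₂ B₃) (𝓝[>] 0) (𝓝 0) := by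
  unfold gridError
  simpa using (tendsto_refinementError hz₁).add (tendsto_refinementError hz₂)

theorem SewingBounds.exists_riemannApprox [CompleteSpace V] (hz₁ : 1 < z₁) (hz₂ : 1 < z₂)
    (hb : SewingBounds a T z₁ z₂ B₁ B₂ B₃) {s s' t t' : ℝ} (hs : 0 ≤ s) (hss' : s ≤ s')
    (hs' : s' ≤ T) (ht : 0 ≤ t) (htt' : t ≤ t') (ht' : t' ≤ T) :
    ∃ L, RiemannApprox a (gridError T z₁ z₂ B₁ B₂ B₃) s s' t t' L := by
  set P : ℝ → V → Prop := fun η x => 0 < η ∧ ∃ m n σ τ, IsGrid s s' m σ ∧ IsGrid t t' n τ ∧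
    MeshLE m σ η ∧ MeshLE n τ η ∧ riemannSum a m σ n τ = x
  have hP : ∀ η > 0, ∃ x, P η x := by
    intro η hη
    obtain ⟨m, σ, hσ, hmσ⟩ := exists_grid_meshLE hss' hη
    obtain ⟨n, τ, hτ, hmτ⟩ := exists_grid_meshLE htt' hη
    exact ⟨_, hη, m, n, σ, τ, hσ, hτ, hmσ, hmτ, rfl⟩
  have hclose : ∀ η η' x x', P η x → P η' x' →
      ‖x - x'‖ ≤ gridError T z₁ z₂ B₁ B₂ B₃ η + gridError T z₁ z₂ B₁ B₂ B₃ η' := by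
    rintro η η' _ _ ⟨hη, m, n, σ, τ, hσ, hτ, hmσ, hmτ, rfl⟩
      ⟨hη', m', n', σ', τ', hσ', hτ', hmσ', hmτ', rfl⟩
    exact hb.norm_riemannSum_sub_riemannSum_le hz₁ hz₂ hs hs' ht ht' hη.le hη'.le hσ hτ hmσ hmτ
      hσ' hτ' hmσ' hmτ'
  obtain ⟨L, hL⟩ := exists_forall_norm_sub_le P (tendsto_gridError hz₁ hz₂) hP hclose
  exact ⟨L, fun η hη m n σ τ hσ hτ hmσ hmτ => hL η _ ⟨hη, m, n, σ, τ, hσ, hτ, hmσ, hmτ, rfl⟩⟩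

variable {ω : ℝ → ℝ}

theorem increment_eq_of_riemannApprox (hω : Tendsto ω (𝓝[>] 0) (𝓝 0))
    {L : ℝ → ℝ → ℝ → ℝ → V} (hL : ∀ s s' t t', 0 ≤ s → s ≤ s' → s' ≤ T → 0 ≤ t → t ≤ t' →
      t' ≤ T → RiemannApprox a ω s s' t t' (L s s' t t'))
    {s s' t t' : ℝ} (hs : 0 ≤ s) (hss' : s ≤ s') (hs' : s' ≤ T) (ht : 0 ≤ t) (htt' : t ≤ t')
    (ht' : t' ≤ T) : L 0 s' 0 t' - L 0 s 0 t' - L 0 s' 0 t + L 0 s 0 t = L s s' t t' := by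
  have e₁ : L 0 s' 0 t' = L 0 s 0 t' + L s s' 0 t' :=
    (hL 0 s' 0 t' le_rfl (hs.trans hss') hs' le_rfl (ht.trans htt') ht').eq_add_left hω hs hss'
      (ht.trans htt') (hL 0 s 0 t' le_rfl hs (hss'.trans hs') le_rfl (ht.trans htt') ht')
      (hL s s' 0 t' hs hss' hs' le_rfl (ht.trans htt') ht')
  have e₂ : L 0 s' 0 t = L 0 s 0 t + L s s' 0 t :=
    (hL 0 s' 0 t le_rfl (hs.trans hss') hs' le_rfl ht (htt'.trans ht')).eq_add_left hω hs hss' ht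
      (hL 0 s 0 t le_rfl hs (hss'.trans hs') le_rfl ht (htt'.trans ht'))
      (hL s s' 0 t hs hss' hs' le_rfl ht (htt'.trans ht'))
  have e₃ : L s s' 0 t' = L s s' 0 t + L s s' t t' :=
    (hL s s' 0 t' hs hss' hs' le_rfl (ht.trans htt') ht').eq_add_right hω hss' ht htt'
      (hL s s' 0 t hs hss' hs' le_rfl ht (htt'.trans ht')) (hL s s' t t' hs hss' hs' ht htt' ht')
  rw [e₁, e₂, e₃]
  abel

theorem uniformGrid_zero_mem {x : ℝ} {n i : ℕ} (hx : x ∈ Icc 0 T) (hi : i ≤ n) :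
    uniformGrid 0 x n i ∈ Icc 0 T :=
  Icc_subset_Icc le_rfl hx.2 (uniformGrid_mem hx.1 hi)

theorem continuousOn_riemannSum_uniformGrid
    (hac : ContinuousOn (fun q : (ℝ × ℝ) × ℝ × ℝ => a q.1.1 q.1.2 q.2.1 q.2.2)
      ((Icc 0 T ×ˢ Icc 0 T) ×ˢ (Icc 0 T ×ˢ Icc 0 T))) (n : ℕ) :
    ContinuousOn (fun q : ℝ × ℝ => riemannSum a n (uniformGrid 0 q.1 n) n (uniformGrid 0 q.2 n))
      (Icc 0 T ×ˢ Icc 0 T) := by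
  simp only [riemannSum, gridSum]
  refine continuousOn_finsetSum _ fun i hi => continuousOn_finsetSum _ fun j hj => ?_
  have hi : i + 1 ≤ n := mem_range.mp hi
  have hj : j + 1 ≤ n := mem_range.mp hj
  refine hac.comp (f := fun q : ℝ × ℝ => ((uniformGrid 0 q.1 n i, uniformGrid 0 q.1 n (i + 1)),
    (uniformGrid 0 q.2 n j, uniformGrid 0 q.2 n (j + 1)))) (by simp only [uniformGrid]; fun_prop)
    fun q hq => ?_
  exact ⟨⟨uniformGrid_zero_mem hq.1 (by omega), uniformGrid_zero_mem hq.1 hi⟩,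
    ⟨uniformGrid_zero_mem hq.2 (by omega), uniformGrid_zero_mem hq.2 hj⟩⟩

theorem riemannSum_uniformGrid_eq_zero
    (ha0 : ∀ s₁ s₂ t₁ t₂ : ℝ, s₁ ∈ Icc 0 T → s₂ ∈ Icc 0 T → t₁ ∈ Icc 0 T →
      t₂ ∈ Icc 0 T → (s₁ = s₂ ∨ t₁ = t₂) → a s₁ s₂ t₁ t₂ = 0)
    {x y : ℝ} (hx : x ∈ Icc 0 T) (hy : y ∈ Icc 0 T) (hxy : x = 0 ∨ y = 0) (n : ℕ) :
    riemannSum a n (uniformGrid 0 x n) n (uniformGrid 0 y n) = 0 := by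
  simp only [riemannSum, gridSum]
  refine sum_eq_zero fun i hi => sum_eq_zero fun j hj => ?_
  have hi : i + 1 ≤ n := mem_range.mp hi
  have hj : j + 1 ≤ n := mem_range.mp hj
  refine ha0 _ _ _ _ (uniformGrid_zero_mem hx (by omega)) (uniformGrid_zero_mem hx hi)
    (uniformGrid_zero_mem hy (by omega)) (uniformGrid_zero_mem hy hj) ?_
  rcases hxy with rfl | rfl
  · exact Or.inl (by simp [uniformGrid])
  · exact Or.inr (by simp [uniformGrid])

/-- The primitive is the uniform limit of Riemann sums over uniform grids. -/
theorem continuousOn_of_riemannApprox (hT : 0 < T)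
    (hac : ContinuousOn (fun q : (ℝ × ℝ) × ℝ × ℝ => a q.1.1 q.1.2 q.2.1 q.2.2)
      ((Icc 0 T ×ˢ Icc 0 T) ×ˢ (Icc 0 T ×ˢ Icc 0 T)))
    (ha0 : ∀ s₁ s₂ t₁ t₂ : ℝ, s₁ ∈ Icc 0 T → s₂ ∈ Icc 0 T → t₁ ∈ Icc 0 T →
      t₂ ∈ Icc 0 T → (s₁ = s₂ ∨ t₁ = t₂) → a s₁ s₂ t₁ t₂ = 0)
    (hω : Tendsto ω (𝓝[>] 0) (𝓝 0)) {f : ℝ → ℝ → V}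
    (hf : ∀ s ∈ Icc 0 T, ∀ t ∈ Icc 0 T, RiemannApprox a ω 0 s 0 t (f s t)) :
    ContinuousOn (fun q : ℝ × ℝ => f q.1 q.2) (Icc 0 T ×ˢ Icc 0 T) := by
  have hmesh : ∀ {x : ℝ} (k : ℕ), x ∈ Icc 0 T →
      MeshLE (k + 1) (uniformGrid 0 x (k + 1)) (T / ((k + 1 : ℕ) : ℝ)) := fun k hx i hi =>
    (meshLE_uniformGrid 0 _ (k + 1) i hi).trans (by gcongr; linarith [hx.2])
  have hωk := hω.comp (tendsto_div_natCast_succ_nhdsGT hT)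
  suffices hunif : TendstoUniformlyOn (fun k (q : ℝ × ℝ) => riemannSum a (k + 1)
      (uniformGrid 0 q.1 (k + 1)) (k + 1) (uniformGrid 0 q.2 (k + 1))) (fun q => f q.1 q.2) atTop
      (Icc 0 T ×ˢ Icc 0 T) from
    hunif.continuousOn (Frequently.of_forall fun k => continuousOn_riemannSum_uniformGrid hac _)
  refine Metric.tendstoUniformlyOn_iff.mpr fun ε hε => ?_
  filter_upwards [hωk.eventually (gt_mem_nhds hε)] with k hk ⟨x, y⟩ ⟨hx, hy⟩
  dsimp only at hx hy ⊢
  rcases hx.1.eq_or_lt with rfl | hx₀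
  · rw [(hf 0 hx y hy).eq_zero_left hω hy.1, riemannSum_uniformGrid_eq_zero ha0 hx hy (Or.inl rfl),
      dist_self]
    exact hε
  rcases hy.1.eq_or_lt with rfl | hy₀
  · rw [(hf x hx 0 hy).eq_zero_right hω hx.1, riemannSum_uniformGrid_eq_zero ha0 hx hy (Or.inr rfl),
      dist_self]
    exact hε
  rw [dist_comm, dist_eq_norm]
  exact (hf x hx y hy _ (by positivity) _ _ _ _ (isGrid_uniformGrid hx₀ k.succ_ne_zero)
    (isGrid_uniformGrid hy₀ k.succ_ne_zero) (hmesh k hx) (hmesh k hy)).trans_lt hk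

end Existence

end Sewing

theorem stmt3_general
    {V : Type*} [NormedAddCommGroup V] [CompleteSpace V]
    (T : ℝ) (hT : 0 < T) (z₁ z₂ : ℝ) (hz₁ : 1 < z₁) (hz₂ : 1 < z₂)
    (a : ℝ → ℝ → ℝ → ℝ → V)
    -- a ∈ 𝒞𝒞_{2,2}(V)
    (hac : ContinuousOn (fun q : (ℝ × ℝ) × ℝ × ℝ => a q.1.1 q.1.2 q.2.1 q.2.2)
      ((Icc 0 T ×ˢ Icc 0 T) ×ˢ (Icc 0 T ×ˢ Icc 0 T)))
    (ha0 : ∀ s₁ s₂ t₁ t₂ : ℝ, s₁ ∈ Icc 0 T → s₂ ∈ Icc 0 T → t₁ ∈ Icc 0 T →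
      t₂ ∈ Icc 0 T → (s₁ = s₂ ∨ t₁ = t₂) → a s₁ s₂ t₁ t₂ = 0)
    -- (i) decomposition of δ₁a
    (h1 : ∃ (N : ℕ) (h : Fin N → ℝ → ℝ → ℝ → ℝ → ℝ → V) (C γ : Fin N → ℝ),
      (∀ k, 0 ≤ C k) ∧ (∀ k, γ k ∈ Set.Ioo (0:ℝ) z₁) ∧
      (∀ k, ContinuousOn
        (fun q : (ℝ × ℝ × ℝ) × ℝ × ℝ => h k q.1.1 q.1.2.1 q.1.2.2 q.2.1 q.2.2)
        ((Icc 0 T ×ˢ Icc 0 T ×ˢ Icc 0 T) ×ˢ (Icc 0 T ×ˢ Icc 0 T)) ∧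
        ∀ s₁ u s₂ t₁ t₂ : ℝ, s₁ ∈ Icc 0 T → u ∈ Icc 0 T → s₂ ∈ Icc 0 T →
          t₁ ∈ Icc 0 T → t₂ ∈ Icc 0 T → (s₁ = u ∨ u = s₂ ∨ t₁ = t₂) →
          h k s₁ u s₂ t₁ t₂ = 0) ∧
      (∀ s₁ u s₂ t₁ t₂ : ℝ, s₁ ∈ Icc 0 T → u ∈ Icc 0 T → s₂ ∈ Icc 0 T →
        t₁ ∈ Icc 0 T → t₂ ∈ Icc 0 T →
        del1 a s₁ u s₂ t₁ t₂ = ∑ k, h k s₁ u s₂ t₁ t₂) ∧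
      (∀ k, ∀ s₁ u s₂ t₁ t₂ : ℝ, s₁ ∈ Icc 0 T → u ∈ Icc 0 T → s₂ ∈ Icc 0 T →
        t₁ ∈ Icc 0 T → t₂ ∈ Icc 0 T →
        ‖h k s₁ u s₂ t₁ t₂‖ ≤ C k * |u - s₁| ^ (γ k) * |s₂ - u| ^ (z₁ - γ k)))
    -- (ii) decomposition of δ₂a
    (h2 : ∃ (N : ℕ) (h : Fin N → ℝ → ℝ → ℝ → ℝ → ℝ → V) (C γ : Fin N → ℝ),
      (∀ k, 0 ≤ C k) ∧ (∀ k, γ k ∈ Set.Ioo (0:ℝ) z₂) ∧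
      (∀ k, ContinuousOn
        (fun q : (ℝ × ℝ) × ℝ × ℝ × ℝ => h k q.1.1 q.1.2 q.2.1 q.2.2.1 q.2.2.2)
        ((Icc 0 T ×ˢ Icc 0 T) ×ˢ (Icc 0 T ×ˢ Icc 0 T ×ˢ Icc 0 T)) ∧
        ∀ s₁ s₂ t₁ v t₂ : ℝ, s₁ ∈ Icc 0 T → s₂ ∈ Icc 0 T → t₁ ∈ Icc 0 T →
          v ∈ Icc 0 T → t₂ ∈ Icc 0 T → (s₁ = s₂ ∨ t₁ = v ∨ v = t₂) →
          h k s₁ s₂ t₁ v t₂ = 0) ∧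
      (∀ s₁ s₂ t₁ v t₂ : ℝ, s₁ ∈ Icc 0 T → s₂ ∈ Icc 0 T → t₁ ∈ Icc 0 T →
        v ∈ Icc 0 T → t₂ ∈ Icc 0 T →
        del2 a s₁ s₂ t₁ v t₂ = ∑ k, h k s₁ s₂ t₁ v t₂) ∧
      (∀ k, ∀ s₁ s₂ t₁ v t₂ : ℝ, s₁ ∈ Icc 0 T → s₂ ∈ Icc 0 T → t₁ ∈ Icc 0 T →
        v ∈ Icc 0 T → t₂ ∈ Icc 0 T →
        ‖h k s₁ s₂ t₁ v t₂‖ ≤ C k * |v - t₁| ^ (γ k) * |t₂ - v| ^ (z₂ - γ k)))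
    -- (iii) ‖δa‖_{z₁,z₂} < ∞
    (h3 : ∃ (N : ℕ) (h : Fin N → ℝ → ℝ → ℝ → ℝ → ℝ → ℝ → V) (C γ₁ γ₂ : Fin N → ℝ),
      (∀ k, 0 ≤ C k) ∧ (∀ k, γ₁ k ∈ Set.Ioo (0:ℝ) z₁) ∧ (∀ k, γ₂ k ∈ Set.Ioo (0:ℝ) z₂) ∧
      (∀ s₁ u₁ s₂ t₁ u₂ t₂ : ℝ, s₁ ∈ Icc 0 T → u₁ ∈ Icc 0 T → s₂ ∈ Icc 0 T →
        t₁ ∈ Icc 0 T → u₂ ∈ Icc 0 T → t₂ ∈ Icc 0 T →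
        delFull a s₁ u₁ s₂ t₁ u₂ t₂ = ∑ k, h k s₁ u₁ s₂ t₁ u₂ t₂) ∧
      (∀ k, ∀ s₁ u₁ s₂ t₁ u₂ t₂ : ℝ, s₁ ∈ Icc 0 T → u₁ ∈ Icc 0 T → s₂ ∈ Icc 0 T →
        t₁ ∈ Icc 0 T → u₂ ∈ Icc 0 T → t₂ ∈ Icc 0 T →
        ‖h k s₁ u₁ s₂ t₁ u₂ t₂‖ ≤ C k * |u₁ - s₁| ^ (γ₁ k) * |s₂ - u₁| ^ (z₁ - γ₁ k)
          * |u₂ - t₁| ^ (γ₂ k) * |t₂ - u₂| ^ (z₂ - γ₂ k))) :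
    ∃ f : ℝ → ℝ → V,
      ContinuousOn (fun q : ℝ × ℝ => f q.1 q.2) (Icc 0 T ×ˢ Icc 0 T) ∧
      ∀ s s' t t' : ℝ, 0 ≤ s → s ≤ s' → s' ≤ T → 0 ≤ t → t ≤ t' → t' ≤ T →
        ∀ ε > (0:ℝ), ∃ η > (0:ℝ), ∀ (m n : ℕ) (σ τ : ℕ → ℝ),
          IsGrid s s' m σ → IsGrid t t' n τ → MeshLE m σ η → MeshLE n τ η →
          ‖(∑ i ∈ Finset.range m, ∑ j ∈ Finset.range n,
              a (σ i) (σ (i + 1)) (τ j) (τ (j + 1)))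
            - (f s' t' - f s t' - f s' t + f s t)‖ ≤ ε := by
  obtain ⟨N₁, h₁, C₁, γ₁, hC₁, hγ₁, -, hdec₁, hbd₁⟩ := h1
  obtain ⟨N₂, h₂, C₂, γ₂, hC₂, hγ₂, -, hdec₂, hbd₂⟩ := h2
  obtain ⟨N₃, h₃, C₃, γ₃, γ₄, hC₃, hγ₃, hγ₄, hdec₃, hbd₃⟩ := h3
  have hb : Sewing.SewingBounds a T z₁ z₂ (∑ k, C₁ k) (∑ k, C₂ k) (∑ k, C₃ k) :=
    { nonneg₁ := Finset.sum_nonneg fun k _ => hC₁ k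
      nonneg₂ := Finset.sum_nonneg fun k _ => hC₂ k
      nonneg₃ := Finset.sum_nonneg fun k _ => hC₃ k
      norm_del1_le := fun x u y t₁ t₂ hx hu hy ht₁ ht₂ hxu huy =>
        Sewing.norm_le_of_eq_sum (hdec₁ x u y t₁ t₂ hx hu hy ht₁ ht₂) fun k =>
          (hbd₁ k x u y t₁ t₂ hx hu hy ht₁ ht₂).trans
            (Sewing.mul_abs_sub_rpow_mul_abs_sub_rpow_le (hC₁ k) hxu huy (hγ₁ k))
      norm_del2_le := fun s₁ s₂ t₁ v t₂ hs₁ hs₂ ht₁ hv ht₂ ht₁v hvt₂ =>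
        Sewing.norm_le_of_eq_sum (hdec₂ s₁ s₂ t₁ v t₂ hs₁ hs₂ ht₁ hv ht₂) fun k =>
          (hbd₂ k s₁ s₂ t₁ v t₂ hs₁ hs₂ ht₁ hv ht₂).trans
            (Sewing.mul_abs_sub_rpow_mul_abs_sub_rpow_le (hC₂ k) ht₁v hvt₂ (hγ₂ k))
      norm_delFull_le := fun x u y t₁ v t₂ hx hu hy ht₁ hv ht₂ hxu huy ht₁v hvt₂ =>
        (Sewing.norm_le_of_eq_sum (hdec₃ x u y t₁ v t₂ hx hu hy ht₁ hv ht₂) fun k =>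
          (hbd₃ k x u y t₁ v t₂ hx hu hy ht₁ hv ht₂).trans
            (Sewing.mul_abs_sub_rpow_mul_abs_sub_rpow_le₂ (hC₃ k) hxu huy ht₁v hvt₂ (hγ₃ k)
              (hγ₄ k))).trans_eq (mul_assoc _ _ _).symm }
  have hω := Sewing.tendsto_gridError (T := T) (B₁ := ∑ k, C₁ k) (B₂ := ∑ k, C₂ k)
    (B₃ := ∑ k, C₃ k) hz₁ hz₂
  choose! L hL using fun (s s' t t' : ℝ) (hs : 0 ≤ s) (hss' : s ≤ s') (hs' : s' ≤ T) (ht : 0 ≤ t)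
    (htt' : t ≤ t') (ht' : t' ≤ T) => hb.exists_riemannApprox hz₁ hz₂ hs hss' hs' ht htt' ht'
  refine ⟨fun s t => L 0 s 0 t, Sewing.continuousOn_of_riemannApprox hT hac ha0 hω
    fun s hs t ht => hL 0 s 0 t le_rfl hs.1 hs.2 le_rfl ht.1 ht.2, ?_⟩
  intro s s' t t' hs hss' hs' ht htt' ht' ε hε
  beta_reduce
  rw [Sewing.increment_eq_of_riemannApprox hω hL hs hss' hs' ht htt' ht']
  exact (hL s s' t t' hs hss' hs' ht htt' ht').exists_forall_le hω hε

/-- **Two-dimensional integration of small biincrements.**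
If `a ∈ 𝒞𝒞_{2,2}(V)` has `δ₁a`, `δ₂a` and `δa` small in the sense of the stated Hölder
decompositions with exponents `z₁, z₂ > 1`, then there exists a continuous
`f : [0,T]² → V` such that the Riemann sums of `a` over grid partitions of any rectangle
converge to the rectangular increment of `f`. -/
theorem stmt3
    {V : Type*} [NormedAddCommGroup V] [NormedSpace ℝ V] [CompleteSpace V]
    (T : ℝ) (hT : 0 < T) (z₁ z₂ : ℝ) (hz₁ : 1 < z₁) (hz₂ : 1 < z₂)
    (a : ℝ → ℝ → ℝ → ℝ → V)
    -- a ∈ 𝒞𝒞_{2,2}(V)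
    (hac : ContinuousOn (fun q : (ℝ × ℝ) × ℝ × ℝ => a q.1.1 q.1.2 q.2.1 q.2.2)
      ((Icc 0 T ×ˢ Icc 0 T) ×ˢ (Icc 0 T ×ˢ Icc 0 T)))
    (ha0 : ∀ s₁ s₂ t₁ t₂ : ℝ, s₁ ∈ Icc 0 T → s₂ ∈ Icc 0 T → t₁ ∈ Icc 0 T →
      t₂ ∈ Icc 0 T → (s₁ = s₂ ∨ t₁ = t₂) → a s₁ s₂ t₁ t₂ = 0)
    -- (i) decomposition of δ₁a
    (h1 : ∃ (N : ℕ) (h : Fin N → ℝ → ℝ → ℝ → ℝ → ℝ → V) (C γ : Fin N → ℝ),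
      (∀ k, 0 ≤ C k) ∧ (∀ k, γ k ∈ Set.Ioo (0:ℝ) z₁) ∧
      (∀ k, ContinuousOn
        (fun q : (ℝ × ℝ × ℝ) × ℝ × ℝ => h k q.1.1 q.1.2.1 q.1.2.2 q.2.1 q.2.2)
        ((Icc 0 T ×ˢ Icc 0 T ×ˢ Icc 0 T) ×ˢ (Icc 0 T ×ˢ Icc 0 T)) ∧
        ∀ s₁ u s₂ t₁ t₂ : ℝ, s₁ ∈ Icc 0 T → u ∈ Icc 0 T → s₂ ∈ Icc 0 T →
          t₁ ∈ Icc 0 T → t₂ ∈ Icc 0 T → (s₁ = u ∨ u = s₂ ∨ t₁ = t₂) →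
          h k s₁ u s₂ t₁ t₂ = 0) ∧
      (∀ s₁ u s₂ t₁ t₂ : ℝ, s₁ ∈ Icc 0 T → u ∈ Icc 0 T → s₂ ∈ Icc 0 T →
        t₁ ∈ Icc 0 T → t₂ ∈ Icc 0 T →
        del1 a s₁ u s₂ t₁ t₂ = ∑ k, h k s₁ u s₂ t₁ t₂) ∧
      (∀ k, ∀ s₁ u s₂ t₁ t₂ : ℝ, s₁ ∈ Icc 0 T → u ∈ Icc 0 T → s₂ ∈ Icc 0 T →
        t₁ ∈ Icc 0 T → t₂ ∈ Icc 0 T →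
        ‖h k s₁ u s₂ t₁ t₂‖ ≤ C k * |u - s₁| ^ (γ k) * |s₂ - u| ^ (z₁ - γ k)))
    -- (ii) decomposition of δ₂a
    (h2 : ∃ (N : ℕ) (h : Fin N → ℝ → ℝ → ℝ → ℝ → ℝ → V) (C γ : Fin N → ℝ),
      (∀ k, 0 ≤ C k) ∧ (∀ k, γ k ∈ Set.Ioo (0:ℝ) z₂) ∧
      (∀ k, ContinuousOn
        (fun q : (ℝ × ℝ) × ℝ × ℝ × ℝ => h k q.1.1 q.1.2 q.2.1 q.2.2.1 q.2.2.2)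
        ((Icc 0 T ×ˢ Icc 0 T) ×ˢ (Icc 0 T ×ˢ Icc 0 T ×ˢ Icc 0 T)) ∧
        ∀ s₁ s₂ t₁ v t₂ : ℝ, s₁ ∈ Icc 0 T → s₂ ∈ Icc 0 T → t₁ ∈ Icc 0 T →
          v ∈ Icc 0 T → t₂ ∈ Icc 0 T → (s₁ = s₂ ∨ t₁ = v ∨ v = t₂) →
          h k s₁ s₂ t₁ v t₂ = 0) ∧
      (∀ s₁ s₂ t₁ v t₂ : ℝ, s₁ ∈ Icc 0 T → s₂ ∈ Icc 0 T → t₁ ∈ Icc 0 T →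
        v ∈ Icc 0 T → t₂ ∈ Icc 0 T →
        del2 a s₁ s₂ t₁ v t₂ = ∑ k, h k s₁ s₂ t₁ v t₂) ∧
      (∀ k, ∀ s₁ s₂ t₁ v t₂ : ℝ, s₁ ∈ Icc 0 T → s₂ ∈ Icc 0 T → t₁ ∈ Icc 0 T →
        v ∈ Icc 0 T → t₂ ∈ Icc 0 T →
        ‖h k s₁ s₂ t₁ v t₂‖ ≤ C k * |v - t₁| ^ (γ k) * |t₂ - v| ^ (z₂ - γ k)))
    -- (iii) ‖δa‖_{z₁,z₂} < ∞
    (h3 : ∃ (N : ℕ) (h : Fin N → ℝ → ℝ → ℝ → ℝ → ℝ → ℝ → V) (C γ₁ γ₂ : Fin N → ℝ),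
      (∀ k, 0 ≤ C k) ∧ (∀ k, γ₁ k ∈ Set.Ioo (0:ℝ) z₁) ∧ (∀ k, γ₂ k ∈ Set.Ioo (0:ℝ) z₂) ∧
      (∀ s₁ u₁ s₂ t₁ u₂ t₂ : ℝ, s₁ ∈ Icc 0 T → u₁ ∈ Icc 0 T → s₂ ∈ Icc 0 T →
        t₁ ∈ Icc 0 T → u₂ ∈ Icc 0 T → t₂ ∈ Icc 0 T →
        delFull a s₁ u₁ s₂ t₁ u₂ t₂ = ∑ k, h k s₁ u₁ s₂ t₁ u₂ t₂) ∧
      (∀ k, ∀ s₁ u₁ s₂ t₁ u₂ t₂ : ℝ, s₁ ∈ Icc 0 T → u₁ ∈ Icc 0 T → s₂ ∈ Icc 0 T →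
        t₁ ∈ Icc 0 T → u₂ ∈ Icc 0 T → t₂ ∈ Icc 0 T →
        ‖h k s₁ u₁ s₂ t₁ u₂ t₂‖ ≤ C k * |u₁ - s₁| ^ (γ₁ k) * |s₂ - u₁| ^ (z₁ - γ₁ k)
          * |u₂ - t₁| ^ (γ₂ k) * |t₂ - u₂| ^ (z₂ - γ₂ k))) :
    ∃ f : ℝ → ℝ → V,
      ContinuousOn (fun q : ℝ × ℝ => f q.1 q.2) (Icc 0 T ×ˢ Icc 0 T) ∧
      ∀ s s' t t' : ℝ, 0 ≤ s → s ≤ s' → s' ≤ T → 0 ≤ t → t ≤ t' → t' ≤ T →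
        ∀ ε > (0:ℝ), ∃ η > (0:ℝ), ∀ (m n : ℕ) (σ τ : ℕ → ℝ),
          IsGrid s s' m σ → IsGrid t t' n τ → MeshLE m σ η → MeshLE n τ η →
          ‖(∑ i ∈ Finset.range m, ∑ j ∈ Finset.range n,
              a (σ i) (σ (i + 1)) (τ j) (τ (j + 1)))
            - (f s' t' - f s t' - f s' t + f s t)‖ ≤ ε :=
  stmt3_general T hT z₁ z₂ hz₁ hz₂ a hac ha0 h1 h2 h3
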